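/- A finite bipartite graph G = (X ⊔ Y, E) admits a nonempty envy-free matching if and only if the bipartite graph (X ⊔ N_G(X), E), obtained from G by deleting the vertices of Y that have no neighbor in X, is not Y-path-saturated. -/

import Mathlib

attribute [local instance] Classical.propDecidable

variable {V : Type*}

/-- `X, Y` form a bipartition of the vertex set of the simple graph `G`:
they are disjoint, cover all vertices, and every edge joins `X` to `Y`. -/
def IsBipartition [Fintype V] (G : SimpleGraph V) (X Y : Finset V) : Prop :=
  Disjoint X Y ∧ X ∪ Y = Finset.univ ∧
    ∀ ⦃u v : V⦄, G.Adj u v → (u ∈ X ∧ v ∈ Y) ∨ (u ∈ Y ∧ v ∈ X)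

/-- `M` is a matching of `G` all of whose edges go from `X'` to `Y'`
(i.e. a matching of the induced subgraph `G[X', Y']`), recorded as a set of
pairwise vertex-disjoint adjacent pairs. -/
def IsBipMatching (G : SimpleGraph V) (X' Y' : Finset V) (M : Finset (V × V)) : Prop :=
  (∀ p ∈ M, p.1 ∈ X' ∧ p.2 ∈ Y' ∧ G.Adj p.1 p.2) ∧
  ∀ p ∈ M, ∀ q ∈ M, p ≠ q → p.1 ≠ q.1 ∧ p.2 ≠ q.2

/-- `M` is envy-free w.r.t. `X`: no unmatched vertex of `X` is adjacent to a
matched vertex on the `Y`-side of `M`. -/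
def EnvyFree (G : SimpleGraph V) (X : Finset V) (M : Finset (V × V)) : Prop :=
  ∀ x ∈ X, x ∉ M.image Prod.fst → ∀ y ∈ M.image Prod.snd, ¬ G.Adj x y

/-- The (bipartite) graph `G[X ∪ Y]` is `Y`-path-saturated: for some `k ≥ 1` there are
partitions `X = X_0 ⊔ ⋯ ⊔ X_k` and `Y = Y_1 ⊔ ⋯ ⊔ Y_k` such that for `1 ≤ i ≤ k`
there is a perfect matching between `X_i` and `Y_i`, and every vertex of `Y_i` is
adjacent to some vertex of `X_{i-1}`. -/
def YPathSaturated (G : SimpleGraph V) (X Y : Finset V) : Prop :=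
  ∃ k : ℕ, 1 ≤ k ∧ ∃ A B : ℕ → Finset V,
    (∀ i ∈ Finset.range (k + 1), ∀ j ∈ Finset.range (k + 1), i ≠ j → Disjoint (A i) (A j)) ∧
    (∀ i ∈ Finset.Icc 1 k, ∀ j ∈ Finset.Icc 1 k, i ≠ j → Disjoint (B i) (B j)) ∧
    X = (Finset.range (k + 1)).biUnion A ∧
    Y = (Finset.Icc 1 k).biUnion B ∧
    (∀ i ∈ Finset.Icc 1 k, ∃ f : V → V,
      Set.BijOn f (A i) (B i) ∧ ∀ x ∈ A i, G.Adj x (f x)) ∧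
    (∀ i ∈ Finset.Icc 1 k, ∀ y ∈ B i, ∃ x ∈ A (i - 1), G.Adj x y)

/-!
If `M` is a nonempty envy-free matching and the layers `X_i, Y_i` witness saturation, pull each
matched vertex of `Y` back along the perfect matching of its layer. By envy-freeness this injects
the matched vertices of `Y` into the matched vertices of `X`, and it misses the (matched) neighbour
in `X_{i-1}` of a matched vertex of the lowest matched layer `Y_i`: too few vertices.

Conversely, grow alternating layers from the vertices left unmatched by a maximum matching `M`.
Every vertex of `Y` reached this way is matched, otherwise there is an augmenting path. If some
vertex of `N_G(X)` is never reached, the edges of `M` outside the reached part form a nonempty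
envy-free matching; otherwise the layers show that the graph is `Y`-path-saturated.
-/

open Finset

section

variable {G : SimpleGraph V} {X Y Y' : Finset V} {M N : Finset (V × V)} {B R R' : Finset V}
  {p q : V × V} {x y : V} {n : ℕ}

lemma IsBipMatching.subset (hM : IsBipMatching G X Y M) (hNM : N ⊆ M) :
    IsBipMatching G X Y N :=
  ⟨fun p hp => hM.1 p (hNM hp), fun p hp q hq => hM.2 p (hNM hp) q (hNM hq)⟩

lemma IsBipMatching.mono_right (hM : IsBipMatching G X Y M) (hY : Y ⊆ Y') :
    IsBipMatching G X Y' M :=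
  ⟨fun p hp => ⟨(hM.1 p hp).1, hY (hM.1 p hp).2.1, (hM.1 p hp).2.2⟩, hM.2⟩

lemma IsBipMatching.eq_of_fst_eq (hM : IsBipMatching G X Y M) (hp : p ∈ M) (hq : q ∈ M)
    (h : p.1 = q.1) : p = q := by
  by_contra hpq
  exact (hM.2 p hp q hq hpq).1 h

lemma IsBipMatching.eq_of_snd_eq (hM : IsBipMatching G X Y M) (hp : p ∈ M) (hq : q ∈ M)
    (h : p.2 = q.2) : p = q := by
  by_contra hpq
  exact (hM.2 p hp q hq hpq).2 h

lemma IsBipMatching.card_image_fst (hM : IsBipMatching G X Y M) :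
    (M.image Prod.fst).card = M.card :=
  card_image_of_injOn fun _ hp _ hq => hM.eq_of_fst_eq hp hq

lemma IsBipMatching.card_image_snd (hM : IsBipMatching G X Y M) :
    (M.image Prod.snd).card = M.card :=
  card_image_of_injOn fun _ hp _ hq => hM.eq_of_snd_eq hp hq

lemma IsBipMatching.insert_of_unmatched (hM : IsBipMatching G X Y M) (hx : x ∈ X) (hy : y ∈ Y)
    (hxy : G.Adj x y) (hxM : x ∉ M.image Prod.fst) (hyM : y ∉ M.image Prod.snd) :
    IsBipMatching G X Y (insert (x, y) M) := by
  have hfst : ∀ q ∈ M, q.1 ≠ x := fun q hq h => hxM (mem_image.2 ⟨q, hq, h⟩)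
  have hsnd : ∀ q ∈ M, q.2 ≠ y := fun q hq h => hyM (mem_image.2 ⟨q, hq, h⟩)
  refine ⟨fun p hp => ?_, fun p hp q hq hpq => ?_⟩
  · rcases mem_insert.1 hp with rfl | hp
    exacts [⟨hx, hy, hxy⟩, hM.1 p hp]
  · rcases mem_insert.1 hp with rfl | hp <;> rcases mem_insert.1 hq with rfl | hq
    · exact absurd rfl hpq
    · exact ⟨(hfst q hq).symm, (hsnd q hq).symm⟩
    · exact ⟨hfst p hp, hsnd p hp⟩
    · exact hM.2 p hp q hq hpq

lemma IsBipMatching.of_neighbors [Fintype V] (hM : IsBipMatching G X Y M) :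
    IsBipMatching G X (univ.filter fun y => ∃ x ∈ X, G.Adj x y) M :=
  ⟨fun p hp => ⟨(hM.1 p hp).1,
    mem_filter.2 ⟨mem_univ _, p.1, (hM.1 p hp).1, (hM.1 p hp).2.2⟩, (hM.1 p hp).2.2⟩, hM.2⟩

lemma IsBipartition.neighbors_subset [Fintype V] (h : IsBipartition G X Y) :
    (univ.filter fun y => ∃ x ∈ X, G.Adj x y) ⊆ Y := by
  intro y hy
  obtain ⟨x, hx, hxy⟩ := (mem_filter.1 hy).2
  exact ((h.2.2 hxy).resolve_right fun h' => disjoint_left.1 h.1 hx h'.1).2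

lemma EnvyFree.mem_image_fst (h : EnvyFree G X M) (hx : x ∈ X) (hy : y ∈ M.image Prod.snd)
    (hxy : G.Adj x y) : x ∈ M.image Prod.fst := by
  by_contra hxM
  exact h x hx hxM y hy hxy

lemma IsBipMatching.swap (hM : IsBipMatching G X Y M) (hp : p ∈ M) (hx : x ∈ X)
    (hxM : x ∉ M.image Prod.fst) (hxp : G.Adj x p.2) :
    IsBipMatching G X Y (insert (x, p.2) (M.erase p)) := by
  refine (hM.subset (erase_subset p M)).insert_of_unmatched hx (hM.1 p hp).2.1 hxp
    (fun h => hxM (image_subset_image (erase_subset p M) h)) fun h => ?_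
  obtain ⟨q, hq, hqp⟩ := mem_image.1 h
  exact (mem_erase.1 hq).1 (hM.eq_of_snd_eq (mem_erase.1 hq).2 hp hqp)

lemma image_snd_swap (hp : p ∈ M) :
    (insert (x, p.2) (M.erase p)).image Prod.snd = M.image Prod.snd := by
  conv_rhs => rw [← insert_erase hp]
  simp only [image_insert]

lemma IsBipMatching.fst_notMem_image_swap (hM : IsBipMatching G X Y M) (hp : p ∈ M)
    (hxM : x ∉ M.image Prod.fst) : p.1 ∉ (insert (x, p.2) (M.erase p)).image Prod.fst := by
  simp only [image_insert, mem_insert, not_or]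
  refine ⟨fun h => hxM (h ▸ mem_image_of_mem _ hp), fun h => ?_⟩
  obtain ⟨q, hq, hqp⟩ := mem_image.1 h
  exact (mem_erase.1 hq).1 (hM.eq_of_fst_eq (mem_erase.1 hq).2 hp hqp)

theorem IsBipMatching.eq_empty_of_yPathSaturated (hM : IsBipMatching G X Y M)
    (hEF : EnvyFree G X M) (hsat : YPathSaturated G X Y) : M = ∅ := by
  obtain ⟨k, -, A, B, hAdisj, -, hX, hY, hperf, hadj⟩ := hsat
  by_contra hne
  set S := M.image Prod.fst
  set T := M.image Prod.snd
  have hAX : ∀ j ≤ k, A j ⊆ X := fun j hj x hx =>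
    hX ▸ mem_biUnion.2 ⟨j, mem_range.2 (by omega), hx⟩
  have hAdisj' : ∀ {i j}, i ≤ k → j ≤ k → i ≠ j → Disjoint (A i) (A j) := fun hi hj =>
    hAdisj _ (mem_range.2 (by omega)) _ (mem_range.2 (by omega))
  have : Nonempty (V → V) := ⟨id⟩
  choose! F hFbij hFadj using hperf
  have hpull : ∀ y ∈ T, ∃ j ∈ Icc 1 k, y ∈ B j ∧ ∃ x ∈ A j, F j x = y := by
    intro y hy
    obtain ⟨p, hp, rfl⟩ := mem_image.1 hy
    obtain ⟨j, hj, hyj⟩ := mem_biUnion.1 (hY ▸ (hM.1 p hp).2.1)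
    exact ⟨j, hj, hyj, (hFbij j hj).surjOn hyj⟩
  choose! lay hlay hlayB φ hφA hφF using hpull
  have hφS : ∀ y ∈ T, φ y ∈ S := fun y hy =>
    hEF.mem_image_fst (hAX _ (mem_Icc.1 (hlay y hy)).2 (hφA y hy)) hy
      (by simpa only [hφF y hy] using hFadj _ (hlay y hy) _ (hφA y hy))
  have hφinj : Set.InjOn φ T := by
    intro y hy y' hy' h
    have hj : lay y = lay y' := by
      by_contra hj
      exact disjoint_left.1 (hAdisj' (mem_Icc.1 (hlay y hy)).2 (mem_Icc.1 (hlay y' hy')).2 hj)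
        (hφA y hy) (h ▸ hφA y' hy')
    rw [← hφF y hy, ← hφF y' hy', h, hj]
  obtain ⟨y₀, hy₀, hmin⟩ := exists_min_image T lay ((nonempty_iff_ne_empty.2 hne).image _)
  obtain ⟨x₀, hx₀, hx₀y₀⟩ := hadj _ (hlay y₀ hy₀) y₀ (hlayB y₀ hy₀)
  have hi := mem_Icc.1 (hlay y₀ hy₀)
  have hx₀S : x₀ ∈ S := hEF.mem_image_fst (hAX _ (by omega) hx₀) hy₀ hx₀y₀
  have hφT : T.image φ ⊆ S.erase x₀ := by
    refine image_subset_iff.2 fun y hy => mem_erase.2 ⟨fun h => ?_, hφS y hy⟩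
    have hj := mem_Icc.1 (hlay y hy)
    exact disjoint_left.1 (hAdisj' hj.2 (by omega) (by have := hmin y hy; omega))
      (hφA y hy) (h ▸ hx₀)
  have := card_le_card hφT
  rw [card_image_of_injOn hφinj, card_erase_of_mem hx₀S, hM.card_image_fst,
    hM.card_image_snd] at this
  have := card_pos.2 (nonempty_iff_ne_empty.2 hne)
  omega

noncomputable def mates (M : Finset (V × V)) (R : Finset V) : Finset V :=
  (M.filter fun p => p.2 ∈ R).image Prod.fst

noncomputable def altReachX (X : Finset V) (M : Finset (V × V)) (R : Finset V) : Finset V :=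
  X \ M.image Prod.fst ∪ mates M R

/-- `altReachY G X Y M n` is the set of vertices of `Y` reachable from an `M`-unmatched vertex
of `X` by an `M`-alternating path with at most `n` non-matching edges. -/
noncomputable def altReachY (G : SimpleGraph V) (X Y : Finset V) (M : Finset (V × V)) :
    ℕ → Finset V
  | 0 => ∅
  | n + 1 => Y.filter fun y => ∃ x ∈ altReachX X M (altReachY G X Y M n), G.Adj x y

lemma mem_mates : x ∈ mates M R ↔ ∃ y ∈ R, (x, y) ∈ M := by
  simp [mates, and_comm]

lemma mem_altReachX :
    x ∈ altReachX X M R ↔ x ∈ X ∧ x ∉ M.image Prod.fst ∨ ∃ y ∈ R, (x, y) ∈ M := by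
  rw [altReachX, mem_union, mem_sdiff, mem_mates]

lemma mem_altReachY_succ :
    y ∈ altReachY G X Y M (n + 1) ↔
      y ∈ Y ∧ ∃ x ∈ altReachX X M (altReachY G X Y M n), G.Adj x y := by
  simp [altReachY]

lemma altReachX_mono : Monotone (altReachX X M) := fun _ _ h =>
  union_subset_union subset_rfl (image_subset_image (monotone_filter_right _ fun _ _ hp => h hp))

lemma altReachY_mono : Monotone (altReachY G X Y M) := by
  refine monotone_nat_of_le_succ fun n => ?_
  induction n with
  | zero => exact empty_subset _
  | succ n ih =>
    intro y hy
    obtain ⟨hy, x, hx, hxy⟩ := mem_altReachY_succ.1 hy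
    exact mem_altReachY_succ.2 ⟨hy, x, altReachX_mono ih hx, hxy⟩

lemma altReachY_subset : altReachY G X Y M n ⊆ Y := by
  cases n
  exacts [empty_subset _, filter_subset _ _]

lemma IsBipMatching.altReachX_subset (hM : IsBipMatching G X Y M) : altReachX X M R ⊆ X := by
  refine union_subset sdiff_subset fun x hx => ?_
  obtain ⟨y, -, hxy⟩ := mem_mates.1 hx
  exact (hM.1 _ hxy).1

/-- Flipping the even alternating path that reaches `x` from an unmatched vertex. -/
lemma IsBipMatching.exists_flip (hM : IsBipMatching G X Y M)
    (hx : x ∈ altReachX X M (altReachY G X Y M n)) :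
    ∃ N, IsBipMatching G X Y N ∧ N.image Prod.snd = M.image Prod.snd ∧
      x ∉ N.image Prod.fst ∧ M.filter (fun p => p.2 ∉ altReachY G X Y M n) ⊆ N := by
  induction n generalizing x with
  | zero =>
    refine ⟨M, hM, rfl, ?_, filter_subset _ _⟩
    rcases mem_altReachX.1 hx with hx | ⟨y, hy, -⟩
    exacts [hx.2, absurd hy (notMem_empty y)]
  | succ n ih =>
    rcases mem_altReachX.1 hx with hx | ⟨y, hy, hxy⟩
    · exact ⟨M, hM, rfl, hx.2, filter_subset _ _⟩
    by_cases hyn : y ∈ altReachY G X Y M n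
    · obtain ⟨N, hN, hsnd, hxN, hMN⟩ := ih (mem_altReachX.2 (Or.inr ⟨y, hyn, hxy⟩))
      refine ⟨N, hN, hsnd, hxN, (monotone_filter_right _ fun p _ h h' => ?_).trans hMN⟩
      exact h (altReachY_mono n.le_succ h')
    obtain ⟨-, x₁, hx₁, hx₁y⟩ := mem_altReachY_succ.1 hy
    obtain ⟨N, hN, hsnd, hx₁N, hMN⟩ := ih hx₁
    have hxyN : (x, y) ∈ N := hMN (mem_filter.2 ⟨hxy, hyn⟩)
    refine ⟨_, hN.swap hxyN (hM.altReachX_subset hx₁) hx₁N hx₁y,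
      (image_snd_swap hxyN).trans hsnd, hN.fst_notMem_image_swap hxyN hx₁N, fun p hp => ?_⟩
    obtain ⟨hpM, hpn⟩ := mem_filter.1 hp
    refine mem_insert_of_mem (mem_erase.2 ⟨?_, hMN (mem_filter.2 ⟨hpM, ?_⟩)⟩)
    · rintro rfl
      exact hpn hy
    · exact fun h => hpn (altReachY_mono n.le_succ h)

/-- A reached but unmatched vertex would end an augmenting path. -/
lemma IsBipMatching.altReachY_subset_image_snd (hM : IsBipMatching G X Y M)
    (hmax : ∀ N, IsBipMatching G X Y N → N.card ≤ M.card) :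
    altReachY G X Y M n ⊆ M.image Prod.snd := by
  cases n with
  | zero => exact empty_subset _
  | succ n =>
    intro y hy
    by_contra hyM
    obtain ⟨hyY, x, hx, hxy⟩ := mem_altReachY_succ.1 hy
    obtain ⟨N, hN, hsnd, hxN, -⟩ := hM.exists_flip hx
    have hxyN : (x, y) ∉ N := fun h => hxN (mem_image_of_mem _ h)
    have := hmax _ (hN.insert_of_unmatched (hM.altReachX_subset hx) hyY hxy hxN (hsnd ▸ hyM))
    rw [card_insert_of_notMem hxyN, ← hN.card_image_snd, hsnd, hM.card_image_snd] at this
    omega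

lemma exists_altReachY_succ_eq : ∃ n, altReachY G X Y M (n + 1) = altReachY G X Y M n := by
  obtain ⟨m, n, hmn, h⟩ := Set.Finite.exists_lt_map_eq_of_forall_mem
    (f := altReachY G X Y M) (fun _ => mem_powerset.2 altReachY_subset) Y.powerset.finite_toSet
  exact ⟨m, subset_antisymm (h ▸ altReachY_mono hmn) (altReachY_mono m.le_succ)⟩

/-- An `X`-vertex missed by the edges of `M` leaving `R` lies in `altReachX X M R`, so once the
search has stopped its neighbours lie in `R`. -/
lemma IsBipMatching.exists_envyFree (hM : IsBipMatching G X Y M)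
    (hstab : altReachY G X Y M (n + 1) = altReachY G X Y M n) (hy : y ∈ Y)
    (hyn : y ∉ altReachY G X Y M n) (hx : x ∈ X) (hxy : G.Adj x y) :
    ∃ M', IsBipMatching G X Y M' ∧ M'.Nonempty ∧ EnvyFree G X M' := by
  set R := altReachY G X Y M n
  have hreach : ∀ x ∈ X, x ∉ (M.filter fun p => p.2 ∉ R).image Prod.fst →
      x ∈ altReachX X M R := by
    intro x hx hx'
    refine mem_altReachX.2 (or_iff_not_imp_left.2 fun h => ?_)
    obtain ⟨p, hp, rfl⟩ := mem_image.1 (not_not.1 (not_and.1 h hx))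
    by_contra hpR
    exact hx' (mem_image_of_mem _ (mem_filter.2 ⟨hp, fun h => hpR ⟨p.2, h, hp⟩⟩))
  have hclosed : ∀ x ∈ altReachX X M R, ∀ y ∈ Y, G.Adj x y → y ∈ R :=
    fun x hx y hy hxy => hstab ▸ mem_altReachY_succ.2 ⟨hy, x, hx, hxy⟩
  refine ⟨M.filter fun p => p.2 ∉ R, hM.subset (filter_subset _ _), ?_, ?_⟩
  · by_contra hempty
    rw [not_nonempty_iff_eq_empty] at hempty
    exact hyn (hclosed x (hreach x hx (by simp [hempty])) y hy hxy)
  · intro x hx hx' y hy hxy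
    obtain ⟨p, hp, rfl⟩ := mem_image.1 hy
    obtain ⟨hpM, hpR⟩ := mem_filter.1 hp
    exact hpR (hclosed x (hreach x hx hx') _ (hM.1 p hpM).2.1 hxy)

lemma IsBipMatching.altReachX_sdiff (hM : IsBipMatching G X Y M) :
    altReachX X M R' \ altReachX X M R = mates M (R' \ R) := by
  ext x
  simp only [mem_sdiff, mem_altReachX, mem_mates, not_or, not_and, not_exists, not_not]
  constructor
  · rintro ⟨hx | ⟨y, hy, hxy⟩, hmatched, hR⟩
    · exact absurd (hmatched hx.1) hx.2
    · exact ⟨y, ⟨hy, fun hyR => hR y hyR hxy⟩, hxy⟩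
  · rintro ⟨y, ⟨hy, hyR⟩, hxy⟩
    refine ⟨Or.inr ⟨y, hy, hxy⟩, fun _ => mem_image_of_mem _ hxy, fun y' hy' hxy' => ?_⟩
    obtain rfl : y = y' := congrArg Prod.snd (hM.eq_of_fst_eq hxy hxy' rfl)
    exact hyR hy'

lemma IsBipMatching.exists_bijOn_mates (hM : IsBipMatching G X Y M)
    (hB : B ⊆ M.image Prod.snd) :
    ∃ F : V → V, Set.BijOn F (mates M B) B ∧ ∀ x ∈ mates M B, G.Adj x (F x) := by
  have hpartner : ∀ x, ∃ y, x ∈ mates M B → y ∈ B ∧ (x, y) ∈ M := fun x => by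
    by_cases hx : x ∈ mates M B
    · obtain ⟨y, hy, hxy⟩ := mem_mates.1 hx
      exact ⟨y, fun _ => ⟨hy, hxy⟩⟩
    · exact ⟨x, fun h => absurd h hx⟩
  choose F hF using hpartner
  refine ⟨F, ⟨fun x hx => (hF x hx).1, fun x hx x' hx' h => ?_, fun y hy => ?_⟩,
    fun x hx => (hM.1 _ (hF x hx).2).2.2⟩
  · exact congrArg Prod.fst (hM.eq_of_snd_eq (hF x hx).2 (hF x' hx').2 h)
  · obtain ⟨p, hp, rfl⟩ := mem_image.1 (hB hy)
    have hpB : p.1 ∈ mates M B := mem_mates.2 ⟨p.2, hy, hp⟩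
    exact ⟨p.1, hpB, congrArg Prod.snd (hM.eq_of_fst_eq (hF _ hpB).2 hp rfl)⟩

/-- Layer `i` consists of the vertices first reached after `i` non-matching edges. -/
theorem IsBipMatching.yPathSaturated (hM : IsBipMatching G X Y M)
    (hmax : ∀ N, IsBipMatching G X Y N → N.card ≤ M.card)
    (hY : Y ⊆ altReachY G X Y M (n + 1)) : YPathSaturated G X Y := by
  set f := altReachY G X Y M
  set g := fun i => altReachX X M (f i)
  have hf : Monotone f := altReachY_mono
  have hg : Monotone g := altReachX_mono.comp hf
  have hfY : f (n + 1) = Y := subset_antisymm altReachY_subset hY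
  have hgX : g (n + 1) = X := by
    refine subset_antisymm hM.altReachX_subset fun x hx => mem_altReachX.2 ?_
    by_cases hxM : x ∈ M.image Prod.fst
    · obtain ⟨p, hp, rfl⟩ := mem_image.1 hxM
      exact Or.inr ⟨p.2, hY (hM.1 p hp).2.1, hp⟩
    · exact Or.inl ⟨hx, hxM⟩
  refine ⟨n + 1, le_add_self, disjointed g, disjointed f,
    fun i _ j _ hij => disjoint_disjointed g hij, fun i _ j _ hij => disjoint_disjointed f hij,
    ?_, ?_, fun i hi => ?_, fun i hi y hy => ?_⟩
  · rw [← sup_eq_biUnion, ← partialSups_eq_sup_range, partialSups_disjointed,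
      hg.partialSups_eq, hgX]
  · rw [← sup_eq_biUnion, ← zero_add 1, Icc_add_one_left_eq_Ioc,
      sup_Ioc_disjointed_of_monotone hf (Nat.zero_le _), hfY]
    simp [f, altReachY]
  all_goals obtain ⟨j, rfl⟩ : ∃ j, i = j + 1 := ⟨i - 1, by grind⟩
  · rw [hg.disjointed_add_one, hf.disjointed_add_one, hM.altReachX_sdiff]
    exact hM.exists_bijOn_mates (sdiff_subset.trans (hM.altReachY_subset_image_snd hmax))
  · rw [hf.disjointed_add_one, mem_sdiff, mem_altReachY_succ] at hy
    obtain ⟨⟨hyY, x, hx, hxy⟩, hyj⟩ := hy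
    refine ⟨x, ?_, hxy⟩
    cases j with
    | zero => simpa using hx
    | succ j =>
      rw [Nat.add_sub_cancel, hg.disjointed_add_one]
      exact mem_sdiff.2 ⟨hx, fun hx' => hyj (mem_altReachY_succ.2 ⟨hyY, x, hx', hxy⟩)⟩

lemma exists_isBipMatching_card_max :
    ∃ M, IsBipMatching G X Y M ∧ ∀ N, IsBipMatching G X Y N → N.card ≤ M.card := by
  have hsub : ∀ N, IsBipMatching G X Y N → N ∈ (X ×ˢ Y).powerset := fun N hN =>
    mem_powerset.2 fun p hp => mem_product.2 ⟨(hN.1 p hp).1, (hN.1 p hp).2.1⟩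
  obtain ⟨M, hM, hmax⟩ := exists_max_image (((X ×ˢ Y).powerset).filter (IsBipMatching G X Y))
    card ⟨∅, mem_filter.2 ⟨empty_mem_powerset _, by simp [IsBipMatching]⟩⟩
  exact ⟨M, (mem_filter.1 hM).2, fun N hN => hmax N (mem_filter.2 ⟨hsub N hN, hN⟩)⟩

theorem yPathSaturated_of_not_exists_envyFree (hY : ∀ y ∈ Y, ∃ x ∈ X, G.Adj x y)
    (h : ¬ ∃ M, IsBipMatching G X Y M ∧ M.Nonempty ∧ EnvyFree G X M) :
    YPathSaturated G X Y := by
  obtain ⟨M, hM, hmax⟩ := exists_isBipMatching_card_max (G := G) (X := X) (Y := Y)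
  obtain ⟨n, hstab⟩ := exists_altReachY_succ_eq (G := G) (X := X) (Y := Y) (M := M)
  refine hM.yPathSaturated (n := n) hmax fun y hy => ?_
  rw [hstab]
  by_contra hyn
  obtain ⟨x, hx, hxy⟩ := hY y hy
  exact h (hM.exists_envyFree hstab hy hyn hx hxy)

end

theorem nonempty_envy_free_iff [Fintype V] (G : SimpleGraph V) (X Y : Finset V)
    (hBip : IsBipartition G X Y) :
    (∃ M : Finset (V × V), IsBipMatching G X Y M ∧ M.Nonempty ∧ EnvyFree G X M) ↔
      ¬ YPathSaturated G X (Finset.univ.filter fun y => ∃ x ∈ X, G.Adj x y) := by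
  constructor
  · rintro ⟨M, hM, hne, hEF⟩ hsat
    exact hne.ne_empty (hM.of_neighbors.eq_empty_of_yPathSaturated hEF hsat)
  · intro hns
    by_contra hno
    refine hns (yPathSaturated_of_not_exists_envyFree (fun y hy => (mem_filter.1 hy).2) ?_)
    rintro ⟨M, hM, hne, hEF⟩
    exact hno ⟨M, hM.mono_right hBip.neighbors_subset, hne, hEF⟩
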